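/- Let τ = (1 + √5)/2 and define f_I : (0, π/2) → ℝ by f_I(δ) = −4 sin²(2δ) / ((cos 2δ − (4 + √5)) · (cos 2δ − (1 − 2√5)·τ³)). Then for all δ ∈ (0, π/2) one has f_I(δ) ≤ (9 − √5 − √(6(5 + √5)))/4, with equality if and only if tan δ = (6/(5 + √5))^{1/4}. -/
import Mathlib


noncomputable section

open Real

/-- The golden ratio `τ = (1 + √5)/2`. -/
def τ : ℝ := (1 + Real.sqrt 5) / 2

/-- The squared distance between two neighboring tangent lines in the δ-rotation
process for the icosahedron/dodecahedron pair. -/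
def fI (δ : ℝ) : ℝ :=
  -4 * Real.sin (2 * δ) ^ 2 /
    ((Real.cos (2 * δ) - (4 + Real.sqrt 5)) *
      (Real.cos (2 * δ) - (1 - 2 * Real.sqrt 5) * τ ^ 3))

set_option maxHeartbeats 1000000 in
theorem stmt8 :
    ∀ δ ∈ Set.Ioo (0 : ℝ) (π / 2),
      fI δ ≤ (9 - Real.sqrt 5 - Real.sqrt (6 * (5 + Real.sqrt 5))) / 4 ∧
      (fI δ = (9 - Real.sqrt 5 - Real.sqrt (6 * (5 + Real.sqrt 5))) / 4 ↔
        Real.tan δ = (6 / (5 + Real.sqrt 5)) ^ ((1 : ℝ) / 4)) := by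
  intro δ hδ
  obtain ⟨hδ0, hδπ⟩ := hδ
  set s5 := Real.sqrt 5 with hs5def
  have hs5 : s5 ^ 2 = 5 := Real.sq_sqrt (by norm_num)
  have hs5pos : (2 : ℝ) < s5 := by
    nlinarith [Real.sqrt_nonneg 5, hs5]
  set r := Real.sqrt (6 * (5 + s5)) with hrdef
  have hr2 : r ^ 2 = 30 + 6 * s5 := by
    rw [hrdef, Real.sq_sqrt (by nlinarith)]
    ring
  have hrpos : (0 : ℝ) < r := Real.sqrt_pos.mpr (by nlinarith)
  set M := (9 - s5 - r) / 4 with hM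
  set tstar := ((6 : ℝ) / (5 + s5)) ^ ((1 : ℝ) / 4) with hts
  set cstar := 4 + 3 * s5 - (1 + s5) / 2 * r with hcstar
  set c := Real.cos (2 * δ) with hc
  -- basic facts about c
  have hc1 : c ≤ 1 := Real.cos_le_one _
  have hcδpos : 0 < Real.cos δ :=
    Real.cos_pos_of_mem_Ioo ⟨by linarith [Real.pi_pos], hδπ⟩
  have hcos2 : c = 2 * Real.cos δ ^ 2 - 1 := by
    rw [hc, Real.cos_two_mul]
  have hcsq : 0 < Real.cos δ ^ 2 := pow_pos hcδpos 2
  have hcgt : -1 < c := by nlinarith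
  have hsin2 : Real.sin (2 * δ) ^ 2 = 1 - c ^ 2 := by
    have h := Real.sin_sq_add_cos_sq (2 * δ)
    rw [← hc] at h
    linarith
  have hτ3 : τ ^ 3 = 2 + s5 := by
    unfold τ
    rw [← hs5def]
    linear_combination ((s5 + 3) / 8) * hs5
  have hD : 0 < (4 + s5 - c) * (c + 8 + 3 * s5) :=
    mul_pos (by linarith) (by linarith)
  -- rewrite fI δ
  have hfI : fI δ = 4 * (1 - c ^ 2) / ((4 + s5 - c) * (c + 8 + 3 * s5)) := by
    unfold fI
    rw [← hs5def, ← hc, hτ3, hsin2]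
    have hden : (c - (4 + s5)) * (c - (1 - 2 * s5) * (2 + s5))
        = -((4 + s5 - c) * (c + 8 + 3 * s5)) := by
      linear_combination (2 * (c - 4 - s5)) * hs5
    rw [div_eq_div_iff (by rw [hden]; exact neg_ne_zero.mpr (ne_of_gt hD))
      (ne_of_gt hD)]
    linear_combination (-8 * (1 - c ^ 2) * (c - 4 - s5)) * hs5
  have hM4 : 0 < 4 - M := by rw [hM]; linarith
  -- the key perfect-square identity
  have key : M * ((4 + s5 - c) * (c + 8 + 3 * s5)) - 4 * (1 - c ^ 2)
      = (4 - M) * (c - cstar) ^ 2 := by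
    rw [hM, hcstar]
    linear_combination
      (9/16 - 1/4 * c - 1/16 * r + 13/16 * s5 - 1/4 * s5 * c - 1/8 * s5 * r
        + 3/16 * s5 ^ 2 - 1/16 * s5 ^ 2 * r - 1/16 * s5 ^ 3) * hr2
      + (-91/8 + 1/2 * c + 11/8 * r - 1/4 * r * c - 15/4 * s5 + 3/8 * s5 * r
        - 3/8 * s5 ^ 2) * hs5
  -- the linear identity for cstar
  have hC : 5 + s5 - r = cstar * (5 + s5 + r) := by
    rw [hcstar]
    linear_combination ((1 + s5) / 2) * hr2 + (r / 2) * hs5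
  -- tangent facts
  have htanpos : 0 < Real.tan δ := Real.tan_pos_of_pos_of_lt_pi_div_two hδ0 hδπ
  have h1c : 0 < 1 + c := by nlinarith
  have ht2 : Real.tan δ ^ 2 * (1 + c) = 1 - c := by
    have h2sin : Real.tan δ ^ 2 * (1 + c) = 2 * Real.sin δ ^ 2 := by
      rw [Real.tan_eq_sin_div_cos, div_pow, hcos2]
      field_simp
      ring
    have h := Real.sin_sq_add_cos_sq δ
    rw [h2sin]
    nlinarith [h, hcos2]
  have htan2 : Real.tan δ ^ 2 = (1 - c) / (1 + c) := by
    rw [eq_div_iff (ne_of_gt h1c)]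
    exact ht2
  have hbpos : (0 : ℝ) < 6 / (5 + s5) := by
    apply div_pos (by norm_num) (by linarith)
  have htstarpos : 0 < tstar := by
    rw [hts]
    exact Real.rpow_pos_of_pos hbpos _
  have h5s : (0 : ℝ) < 5 + s5 := by linarith
  have htstar_sq : tstar ^ 2 = r / (5 + s5) := by
    have h2 : tstar ^ 2 = ((6 : ℝ) / (5 + s5)) ^ ((1 : ℝ) / 2) := by
      rw [hts, ← Real.rpow_natCast (((6 : ℝ) / (5 + s5)) ^ ((1 : ℝ) / 4)) 2,
        ← Real.rpow_mul hbpos.le]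
      norm_num
    rw [h2, ← Real.sqrt_eq_rpow]
    rw [show (6 : ℝ) / (5 + s5) = (r / (5 + s5)) ^ 2 by
      rw [div_pow, hr2]; field_simp; ring]
    exact Real.sqrt_sq (div_nonneg hrpos.le h5s.le)
  -- equivalence: tan δ = tstar ↔ c = cstar
  have hiff2 : Real.tan δ ^ 2 = tstar ^ 2 ↔ c = cstar := by
    rw [htan2, htstar_sq, div_eq_div_iff (ne_of_gt h1c) (ne_of_gt h5s)]
    constructor
    · intro h
      have h5 : (0 : ℝ) < 5 + s5 + r := by linarith
      apply mul_right_cancel₀ (ne_of_gt h5)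
      linear_combination hC - h
    · intro h
      rw [h]
      linear_combination hC
  have hsq_iff : Real.tan δ = tstar ↔ Real.tan δ ^ 2 = tstar ^ 2 := by
    constructor
    · intro h; rw [h]
    · intro h
      have h0 : (Real.tan δ - tstar) * (Real.tan δ + tstar) = 0 := by
        linear_combination h
      rcases mul_eq_zero.mp h0 with h' | h'
      · exact sub_eq_zero.mp h'
      · exfalso; linarith
  constructor
  · -- the inequality
    rw [hfI, div_le_iff₀ hD]
    nlinarith [key, sq_nonneg (c - cstar), hM4]
  · -- the equality case
    rw [hfI, div_eq_iff (ne_of_gt hD), hsq_iff, hiff2]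
    constructor
    · intro h
      have h2 : (4 - M) * (c - cstar) ^ 2 = 0 := by linarith [key]
      have h3 : (c - cstar) ^ 2 = 0 := by
        rcases mul_eq_zero.mp h2 with h' | h'
        · exfalso; linarith
        · exact h'
      have h4 : c - cstar = 0 := by
        exact (pow_eq_zero_iff (by norm_num : (2:ℕ) ≠ 0)).mp h3
      linarith
    · intro h
      have h3 : (c - cstar) ^ 2 = 0 := by rw [h]; ring
      rw [h3] at key
      linarith [key]
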